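/- arXiv:2110.09732 — 3 statements merged into one kernel-verified Lean document; each statement's English description precedes it below -/
import Mathlib

section
/- For any finite perfect graph G, the independence number, eternal domination number, and clique covering number of G are all equal. -/
open SimpleGraph

variable {V : Type*}

/-- `D` is a dominating set of `G`. -/
def IsDomSet (G : SimpleGraph V) (D : Finset V) : Prop :=
  ∀ v : V, ∃ u ∈ D, u = v ∨ G.Adj u v

/-- A family of guard configurations closed under defending any attack: every member
of the family is a dominating set, and for every attack on an unguarded vertex `v`
some guard on a neighbour of `v` can move to `v` so that the resulting configuration
is again in the family.  The defender can perpetually defend every infinite sequence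
of attacks starting from `D` iff `D` belongs to such a family. -/
def IsEDFamily [DecidableEq V] (G : SimpleGraph V) (F : Set (Finset V)) : Prop :=
  ∀ D ∈ F, IsDomSet G D ∧
    ∀ v ∉ D, ∃ u ∈ D, G.Adj u v ∧ insert v (D.erase u) ∈ F

/-- The eternal domination number `γ∞(G)`: the least number of guards admitting a
winning defence strategy. -/
noncomputable def eternalDomNum [DecidableEq V] (G : SimpleGraph V) : ℕ :=
  sInf {k | ∃ F : Set (Finset V), F.Nonempty ∧ (∀ D ∈ F, D.card = k) ∧ IsEDFamily G F}

/-- The independence number `α(G)`. -/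
noncomputable def indepNum (G : SimpleGraph V) : ℕ :=
  sSup {k | ∃ s : Finset V, s.card = k ∧ ∀ u ∈ s, ∀ v ∈ s, ¬ G.Adj u v}

/-- The clique covering number `θ(G)`: the least `k` such that the vertex set can be
partitioned into `k` cliques, i.e. the complement of `G` is properly `k`-colourable. -/
noncomputable def cliqueCoverNum (G : SimpleGraph V) : ℕ :=
  sInf {k | Nonempty (Gᶜ.Coloring (Fin k))}

/-- The domination number `γ(G)`. -/
noncomputable def domNum (G : SimpleGraph V) : ℕ :=
  sInf {k | ∃ D : Finset V, D.card = k ∧ IsDomSet G D}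

/-- The chromatic number (least number of colours of a proper colouring). -/
noncomputable def chromNum {α : Type*} (G : SimpleGraph α) : ℕ :=
  sInf {k | Nonempty (G.Coloring (Fin k))}

/-- The clique number (largest size of a clique). -/
noncomputable def cliqueNumber {α : Type*} (G : SimpleGraph α) : ℕ :=
  sSup {k | ∃ t : Finset α, G.IsNClique k t}

/-- `G` is perfect: every induced subgraph has chromatic number equal to its
clique number. -/
def IsPerfect {α : Type*} (G : SimpleGraph α) : Prop :=
  ∀ s : Set α, chromNum (G.induce s) = cliqueNumber (G.induce s)

/-!
Guards that can answer every attack can be herded, one attack at a time, onto any independent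
set, so `α ≤ γ∞`; keeping one guard in each clique of a minimum clique cover answers an attack by
a move inside the attacked clique, so `γ∞ ≤ θ`. It remains to see `θ(G) = χ(Gᶜ) ≤ ω(Gᶜ) = α(G)`,
the weak perfect graph theorem, for which we follow Gasparian. Take `H` with `Hᶜ`
perfect and `ω(H) < χ(H)` but `χ ≤ ω` on all proper induced subgraphs. Removing any stable set
from `H` leaves an `ω`-clique. A maximum stable set together with the colour classes of
`ω`-colourings of `H - v`, `v` in that set, are `αω + 1` stable sets `S p`; choosing an
`ω`-clique `K q` missing `S q`, one gets `|K q ∩ S p| = [p ≠ q]`, so the indicators of the `S p`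
are linearly independent and `|H| ≥ αω + 1`. On the other hand `H` is covered by
`χ(Hᶜ) = ω(Hᶜ) = α` cliques of size at most `ω`.
-/

open Finset

section RankBound

variable {ι W : Type*} [Fintype ι] [DecidableEq ι] [DecidableEq W]

/-- Pairing `∑ p, g p • 1_{S p} = 0` with `1_{K q}` gives `∑ g = g q` for every `q`: the
intersection matrix `J - I` is nonsingular unless it is `1 × 1`. -/
lemma linearIndependent_indicator_of_card_inter (hι : Fintype.card ι ≠ 1) (S K : ι → Finset W)
    (hSK : ∀ p q, #(K q ∩ S p) = if p = q then 0 else 1) :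
    LinearIndependent ℚ fun p (w : W) => if w ∈ S p then (1 : ℚ) else 0 := by
  rw [Fintype.linearIndependent_iff]
  intro g hg
  have hrow : ∀ q, ∑ p, g p = g q := by
    intro q
    have h : ∑ p, g p * #(K q ∩ S p) = 0 := by
      have := congrArg (fun v => ∑ w ∈ K q, v w) hg
      simp only [Finset.sum_apply, Pi.smul_apply, smul_eq_mul, Pi.zero_apply,
        sum_const_zero] at this
      rw [sum_comm] at this
      simpa only [← mul_sum, sum_boole, filter_mem_eq_inter] using this
    simp only [hSK, apply_ite, Nat.cast_zero, Nat.cast_one, mul_zero, mul_one, sum_ite,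
      sum_const_zero, filter_ne', mem_univ, sum_erase_eq_sub, zero_add] at h
    linarith
  have hsum : ∑ p, g p = 0 := by
    have h : ((Fintype.card ι : ℚ) - 1) * ∑ p, g p = 0 := by
      have : ∑ p, g p = Fintype.card ι * ∑ p, g p := by
        conv_lhs => rw [sum_congr rfl fun p _ => (hrow p).symm]
        simp
      linarith
    exact (mul_eq_zero.1 h).resolve_left (sub_ne_zero.2 (by exact_mod_cast hι))
  intro p
  rw [← hrow p, hsum]

lemma card_le_card_of_card_inter [Fintype W] (hι : Fintype.card ι ≠ 1) (S K : ι → Finset W)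
    (hSK : ∀ p q, #(K q ∩ S p) = if p = q then 0 else 1) :
    Fintype.card ι ≤ Fintype.card W := by
  simpa using (linearIndependent_indicator_of_card_inter hι S K hSK).fintype_card_le_finrank

end RankBound

namespace SimpleGraph

variable {α β : Type*} {G : SimpleGraph α} {H : SimpleGraph β}

lemma chromNum_colorable [Finite α] (G : SimpleGraph α) : G.Colorable (chromNum G) := by
  have := Fintype.ofFinite α
  exact Nat.sInf_mem (s := {k | G.Colorable k}) ⟨_, G.colorable_of_fintype⟩

lemma chromNum_le_of_colorable {k : ℕ} (h : G.Colorable k) : chromNum G ≤ k :=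
  Nat.sInf_le h

lemma chromNum_congr (e : G ≃g H) : chromNum G = chromNum H := by
  change sInf {k | G.Colorable k} = sInf {k | H.Colorable k}
  simp only [colorable_congr e]

lemma IsNClique.map_embedding {n : ℕ} {s : Finset α} (f : G ↪g H) (h : G.IsNClique n s) :
    H.IsNClique n (s.map f.toEmbedding) := by
  refine ⟨?_, by simp [h.card_eq]⟩
  rw [Finset.coe_map]
  rintro _ ⟨x, hx, rfl⟩ _ ⟨y, hy, rfl⟩ hxy
  exact f.map_adj_iff.2 (h.isClique hx hy (ne_of_apply_ne _ hxy))

lemma cliqueNum_congr (e : G ≃g H) : G.cliqueNum = H.cliqueNum :=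
  congrArg sSup <| Set.ext fun _ =>
    ⟨fun ⟨_, hs⟩ => ⟨_, hs.map_embedding e.toEmbedding⟩,
      fun ⟨_, hs⟩ => ⟨_, hs.map_embedding e.symm.toEmbedding⟩⟩

lemma cliqueNumber_eq_cliqueNum : cliqueNumber G = G.cliqueNum := rfl

lemma IsPerfect.chromNum_eq (hG : IsPerfect G) : chromNum G = G.cliqueNum := by
  have := hG Set.univ
  rwa [cliqueNumber_eq_cliqueNum, chromNum_congr (induceUnivIso G),
    cliqueNum_congr (induceUnivIso G)] at this

lemma IsPerfect.induce (hG : IsPerfect G) (s : Set α) : IsPerfect (G.induce s) := by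
  intro t
  let e := ((Embedding.induce (G := G) s).comp (Embedding.induce t)).isoInduceRange
  rw [chromNum_congr e, cliqueNumber_eq_cliqueNum, cliqueNum_congr e]
  exact hG _

lemma compl_induce (s : Set α) : (G.induce s)ᶜ = Gᶜ.induce s := by
  ext x y
  simp [Subtype.ext_iff]

lemma Colorable.succ_of_isIndepSet {S : Set α} {k : ℕ} (h : (G.induce Sᶜ).Colorable k)
    (hS : G.IsIndepSet S) : G.Colorable (k + 1) := by
  classical
  obtain ⟨c⟩ := h
  refine ⟨Coloring.mk (fun x => if hx : x ∈ Sᶜ then (c ⟨x, hx⟩).castSucc else Fin.last k) ?_⟩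
  intro x y hxy
  by_cases hx : x ∈ Sᶜ <;> by_cases hy : y ∈ Sᶜ <;> simp only [hx, hy, dite_true, dite_false]
  · exact Fin.castSucc_injective k |>.ne (c.valid (show (G.induce Sᶜ).Adj ⟨x, hx⟩ ⟨y, hy⟩ from hxy))
  · exact (Fin.castSucc_lt_last _).ne
  · exact (Fin.castSucc_lt_last _).ne'
  · exact absurd hxy (hS (not_not.1 hx) (not_not.1 hy) hxy.ne)

lemma card_le_indepNum_mul_chromNum [Fintype α] (G : SimpleGraph α) :
    Fintype.card α ≤ G.indepNum * chromNum G := by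
  classical
  obtain ⟨c⟩ := chromNum_colorable G
  calc Fintype.card α
      ≤ G.indepNum * #(univ.image c) := by
        refine card_le_mul_card_image _ _ fun j _ => IsIndepSet.card_le_indepNum ?_
        intro x hx y hy _ hxy
        simp only [coe_filter, mem_univ, true_and, Set.mem_ofPred_eq] at hx hy
        exact c.valid hxy (hx.trans hy.symm)
    _ ≤ G.indepNum * chromNum G := by
        gcongr
        simpa using card_le_univ (univ.image c)

lemma IsClique.card_inter_le_one [DecidableEq α] {K S : Finset α} (hK : G.IsClique (K : Set α))
    (hS : G.IsIndepSet (S : Set α)) : #(K ∩ S) ≤ 1 := by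
  refine card_le_one.2 fun x hx y hy => ?_
  rw [mem_inter] at hx hy
  by_contra hxy
  exact hS hx.2 hy.2 hxy (hK hx.1 hy.1 hxy)

lemma IsClique.injOn_erase [DecidableEq α] {β : Type*} {K : Finset α} {f : α → β} {v : α}
    (hK : G.IsClique (K : Set α)) (hf : ∀ x y, x ≠ v → y ≠ v → G.Adj x y → f x ≠ f y) :
    Set.InjOn f (K.erase v) := by
  intro x hx y hy hfxy
  by_contra hxy
  exact hf x y (ne_of_mem_erase hx) (ne_of_mem_erase hy)
    (hK (mem_of_mem_erase hx) (mem_of_mem_erase hy) hxy) hfxy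

section Gasparian

variable {W : Type*} [Fintype W] {H : SimpleGraph W}

lemma exists_isNClique_cliqueNum_disjoint
    (hmin : ∀ u : Set W, u ≠ Set.univ → chromNum (H.induce u) ≤ (H.induce u).cliqueNum)
    (hlt : H.cliqueNum < chromNum H) {S : Finset W} (hS : H.IsIndepSet (S : Set W)) :
    ∃ K, H.IsNClique H.cliqueNum K ∧ Disjoint K S := by
  obtain rfl | ⟨v, hv⟩ := S.eq_empty_or_nonempty
  · obtain ⟨K, hK⟩ := H.exists_isNClique_cliqueNum
    exact ⟨K, hK, disjoint_empty_right K⟩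
  set u : Set W := (S : Set W)ᶜ
  have hu : u ≠ Set.univ := (Set.ne_univ_iff_exists_notMem u).2 ⟨v, not_not.2 hv⟩
  have hχ : H.cliqueNum ≤ chromNum (H.induce u) := by
    by_contra! h
    have : chromNum H ≤ chromNum (H.induce u) + 1 :=
      chromNum_le_of_colorable ((chromNum_colorable (H.induce u)).succ_of_isIndepSet hS)
    omega
  obtain ⟨K, hK⟩ := (H.induce u).exists_isNClique_cliqueNum
  rw [(cliqueNum_induce_le u).antisymm (hχ.trans (hmin u hu)), isNClique_induce_iff] at hK
  refine ⟨_, hK, Finset.disjoint_left.2 ?_⟩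
  simp only [mem_map, Function.Embedding.coe_subtype]
  rintro _ ⟨x, -, rfl⟩
  exact x.2

lemma exists_cliqueNum_coloring_off
    (hmin : ∀ u : Set W, u ≠ Set.univ → chromNum (H.induce u) ≤ (H.induce u).cliqueNum)
    (v : W) : ∃ f : W → Fin H.cliqueNum, ∀ x y, x ≠ v → y ≠ v → H.Adj x y → f x ≠ f y := by
  classical
  set u : Set W := {v}ᶜ
  have hu : u ≠ Set.univ := (Set.ne_univ_iff_exists_notMem u).2 ⟨v, not_not.2 rfl⟩
  obtain ⟨c⟩ := (chromNum_colorable (H.induce u)).mono ((hmin u hu).trans (cliqueNum_induce_le u))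
  have hω : 0 < H.cliqueNum := @IsClique.card_le_cliqueNum _ _ _ {v} (by simp)
  refine ⟨fun x => if hx : x ∈ u then c ⟨x, hx⟩ else ⟨0, hω⟩, fun x y hx hy hxy => ?_⟩
  simp only [dif_pos (show x ∈ u from hx), dif_pos (show y ∈ u from hy)]
  exact c.valid (show (H.induce u).Adj ⟨x, hx⟩ ⟨y, hy⟩ from hxy)

variable [DecidableEq W] {n : ℕ} {K : Finset W} {f : W → Fin n} {v : W}

lemma IsNClique.mem_of_disjoint_colorClass (hK : H.IsNClique n K)
    (hf : ∀ x y, x ≠ v → y ≠ v → H.Adj x y → f x ≠ f y) {j : Fin n}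
    (hd : Disjoint K ({x | x ≠ v ∧ f x = j} : Finset W)) : v ∈ K := by
  by_contra hv
  have hinj := hK.isClique.injOn_erase hf
  rw [erase_eq_of_notMem hv] at hinj
  obtain ⟨x, hx, hfx⟩ := surjOn_of_injOn_of_card_le f (fun x _ => mem_coe.2 (mem_univ (f x))) hinj
    (by simp [hK.card_eq]) (mem_univ j)
  exact Finset.disjoint_left.1 hd hx (by simpa [hfx] using ne_of_mem_of_not_mem hx hv)

lemma IsNClique.eq_of_disjoint_colorClass (hK : H.IsNClique n K) (hv : v ∈ K)
    (hf : ∀ x y, x ≠ v → y ≠ v → H.Adj x y → f x ≠ f y) {j j' : Fin n}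
    (hj : Disjoint K ({x | x ≠ v ∧ f x = j} : Finset W))
    (hj' : Disjoint K ({x | x ≠ v ∧ f x = j'} : Finset W)) :
    j = j' := by
  by_contra hne
  have hmaps : Set.MapsTo f (K.erase v) (univ.erase j) := fun x hx => by
    simp only [coe_erase, Set.mem_sdiff, mem_coe, Set.mem_singleton_iff] at hx
    simpa using fun hfx => Finset.disjoint_left.1 hj hx.1 (by simp [hx.2, hfx])
  obtain ⟨x, hx, hfx⟩ := surjOn_of_injOn_of_card_le f hmaps (hK.isClique.injOn_erase hf)
    (by simp [card_erase_of_mem hv, hK.card_eq]) (mem_erase.2 ⟨Ne.symm hne, mem_univ j'⟩)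
  exact Finset.disjoint_left.1 hj' (mem_of_mem_erase hx) (by simp [ne_of_mem_erase hx, hfx])

/-- Gasparian's `α ω + 1` stable sets: a maximum stable set `t`, and for each `v ∈ t` the colour
classes of an `ω`-colouring `f v` of `H - v`. -/
def gasparianSets (t : Finset W) (f : W → W → Fin n) : Option (t × Fin n) → Finset W
  | none => t
  | some (v, j) => {x | x ≠ v ∧ f v x = j}

lemma IsNClique.subsingleton_disjoint_gasparianSets {t : Finset W} {f : W → W → Fin n}
    (ht : H.IsIndepSet (t : Set W)) (hf : ∀ v x y, x ≠ v → y ≠ v → H.Adj x y → f v x ≠ f v y)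
    (hK : H.IsNClique n K) : {p | Disjoint K (gasparianSets t f p)}.Subsingleton := by
  have hmem : ∀ v j, Disjoint K (gasparianSets t f (some (v, j))) → (v : W) ∈ K :=
    fun v _ hd => hK.mem_of_disjoint_colorClass (hf v) hd
  have hdisj : ∀ v : t, (v : W) ∈ K → ¬ Disjoint K t := fun v hv =>
    Finset.not_disjoint_iff.2 ⟨v, hv, v.2⟩
  rintro (_ | ⟨v, j⟩) hp (_ | ⟨w, j'⟩) hq
  · rfl
  · exact absurd hp (hdisj w (hmem w j' hq))
  · exact absurd hq (hdisj v (hmem v j hp))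
  obtain rfl : v = w := by
    have := hK.isClique.card_inter_le_one ht
    exact Subtype.ext (card_le_one.1 this _ (mem_inter.2 ⟨hmem v j hp, v.2⟩) _
      (mem_inter.2 ⟨hmem w j' hq, w.2⟩))
  rw [hK.eq_of_disjoint_colorClass (hmem v j hp) (hf v) hp hq]

theorem indepNum_mul_cliqueNum_lt_card
    (hmin : ∀ u : Set W, u ≠ Set.univ → chromNum (H.induce u) ≤ (H.induce u).cliqueNum)
    (hlt : H.cliqueNum < chromNum H) : H.indepNum * H.cliqueNum < Fintype.card W := by
  have hW : Nonempty W := by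
    by_contra h
    have := chromNum_le_of_colorable (colorable_zero_iff.2 (not_nonempty_iff.1 h) : H.Colorable 0)
    omega
  obtain ⟨t, ht⟩ := H.exists_isNIndepSet_indepNum
  choose f hf using exists_cliqueNum_coloring_off hmin
  set S := gasparianSets t f
  have hS : ∀ p, H.IsIndepSet (S p : Set W) := by
    rintro (_ | ⟨v, j⟩)
    · exact ht.isIndepSet
    · intro x hx y hy _ hxy
      simp only [S, gasparianSets, coe_filter, mem_univ, true_and, Set.mem_ofPred_eq] at hx hy
      exact hf v x y hx.1 hy.1 hxy (hx.2.trans hy.2.symm)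
  choose K hK hKS using fun p => exists_isNClique_cliqueNum_disjoint hmin hlt (hS p)
  have hSK : ∀ p q, #(K q ∩ S p) = if p = q then 0 else 1 := by
    intro p q
    split_ifs with hpq
    · subst hpq
      exact card_eq_zero.2 (disjoint_iff_inter_eq_empty.1 (hKS p))
    · refine le_antisymm ((hK q).isClique.card_inter_le_one (hS p)) (card_pos.2 ?_)
      rw [← not_disjoint_iff_nonempty_inter]
      exact fun hd => hpq ((hK q).subsingleton_disjoint_gasparianSets ht.isIndepSet hf hd (hKS q))
  have hcard : Fintype.card (Option (t × Fin H.cliqueNum)) = H.indepNum * H.cliqueNum + 1 := by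
    simp [ht.card_eq]
  rcases (H.indepNum * H.cliqueNum).eq_zero_or_pos with h0 | hpos
  · rw [h0]
    exact Fintype.card_pos
  · have := card_le_card_of_card_inter (by omega) S K hSK
    omega

end Gasparian

theorem chromNum_le_cliqueNum_of_isPerfect_compl {W : Type*} [Finite W] (H : SimpleGraph W)
    (hH : IsPerfect Hᶜ) : chromNum H ≤ H.cliqueNum := by
  induction hn : Nat.card W using Nat.strong_induction_on generalizing W with
  | _ n ih =>
  have := Fintype.ofFinite W
  classical
  by_contra! hlt
  have hmin : ∀ u : Set W, u ≠ Set.univ → chromNum (H.induce u) ≤ (H.induce u).cliqueNum := by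
    intro u hu
    obtain ⟨v, hv⟩ := (Set.ne_univ_iff_exists_notMem u).1 hu
    refine ih _ (hn ▸ Finite.card_subtype_lt hv) (H.induce u) ?_ rfl
    rw [compl_induce]
    exact hH.induce u
  have hgas := indepNum_mul_cliqueNum_lt_card hmin hlt
  have hcover := card_le_indepNum_mul_chromNum Hᶜ
  rw [indepNum_compl, hH.chromNum_eq, cliqueNum_compl, mul_comm] at hcover
  omega

end SimpleGraph

section EternalDomination

variable {V β : Type*} [DecidableEq V] {G : SimpleGraph V} {F : Set (Finset V)}

lemma IsEDFamily.exists_superset_of_isIndepSet (hF : IsEDFamily G F) {I : Finset V}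
    (hI : G.IsIndepSet (I : Set V)) {D : Finset V} (hD : D ∈ F) : ∃ D' ∈ F, I ⊆ D' := by
  induction h : #(I \ D) using Nat.strong_induction_on generalizing D with
  | _ n ih =>
  obtain hID | ⟨v, hv⟩ := (I \ D).eq_empty_or_nonempty
  · exact ⟨D, hD, sdiff_eq_empty_iff_subset.1 hID⟩
  rw [mem_sdiff] at hv
  obtain ⟨u, -, huv, hD'⟩ := (hF D hD).2 v hv.2
  have hu : u ∉ I := fun huI => hI huI hv.1 huv.ne huv
  refine ih _ (h ▸ card_lt_card ?_) hD' rfl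
  refine (ssubset_iff_of_subset fun w hw => ?_).2 ⟨v, mem_sdiff.2 hv, by simp⟩
  simp only [mem_sdiff, mem_insert, mem_erase, not_or, not_and] at hw ⊢
  exact ⟨hw.1, fun hwD => hw.2.2 (fun hwu => hu (hwu ▸ hw.1)) hwD⟩

lemma IsEDFamily.indepNum_le (hF : IsEDFamily G F) (hne : F.Nonempty) {k : ℕ}
    (hcard : ∀ D ∈ F, #D = k) : G.indepNum ≤ k := by
  obtain ⟨I, hI⟩ := G.exists_isNIndepSet_indepNum
  obtain ⟨D, hD⟩ := hne
  obtain ⟨D', hD', hID'⟩ := hF.exists_superset_of_isIndepSet hI.isIndepSet hD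
  rw [← hI.card_eq, ← hcard D' hD']
  exact card_le_card hID'

variable [Fintype V] [DecidableEq β]

/-- Guard configurations with exactly one guard in each clique of the cover `c`. -/
def colorTransversals (c : V → β) : Set (Finset V) :=
  {D | Set.InjOn c D ∧ D.image c = univ.image c}

lemma isEDFamily_colorTransversals (c : Gᶜ.Coloring β) :
    IsEDFamily G (colorTransversals c) := by
  have hsame : ∀ {x v}, c x = c v → x = v ∨ G.Adj x v := fun {x v} hxv => by
    by_contra! h
    exact c.valid ((compl_adj G x v).2 h) hxv
  rintro D ⟨hinj, himg⟩
  have hcover : ∀ v, ∃ x ∈ D, c x = c v := fun v =>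
    mem_image.1 (himg ▸ mem_image_of_mem c (mem_univ v))
  refine ⟨fun v => ?_, fun v hv => ?_⟩
  · obtain ⟨x, hx, hxv⟩ := hcover v
    exact ⟨x, hx, hsame hxv⟩
  obtain ⟨x, hx, hxv⟩ := hcover v
  refine ⟨x, hx, (hsame hxv).resolve_left (ne_of_mem_of_not_mem hx hv), ?_, ?_⟩
  · rw [coe_insert, Set.injOn_insert (by simp [hv])]
    refine ⟨hinj.mono (by simp), ?_⟩
    rintro ⟨y, hy, hyv⟩
    rw [mem_coe, mem_erase] at hy
    exact hy.1 (hinj hy.2 hx (hyv.trans hxv.symm))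
  · rw [image_insert, ← himg, ← insert_erase hx, image_insert, hxv, erase_insert_eq_erase,
      erase_idem]

lemma exists_isEDFamily_of_coloring (c : Gᶜ.Coloring β) :
    ∃ F : Set (Finset V), F.Nonempty ∧ (∀ D ∈ F, #D = #(univ.image c)) ∧ IsEDFamily G F := by
  obtain ⟨D, -, hinj, himg⟩ :=
    exists_subset_injOn_image_eq_of_surjOn Set.univ (univ.image c) fun _ hj => by simpa using hj
  refine ⟨colorTransversals c, ⟨D, hinj, himg⟩, fun D hD => ?_, isEDFamily_colorTransversals c⟩
  rw [← hD.2, card_image_of_injOn hD.1]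

end EternalDomination

section Numbers

variable {V : Type*} [Fintype V] [DecidableEq V] (G : SimpleGraph V)

lemma eternalDomNum_le_cliqueCoverNum : eternalDomNum G ≤ cliqueCoverNum G := by
  obtain ⟨c⟩ := chromNum_colorable Gᶜ
  calc eternalDomNum G ≤ #(univ.image c) := Nat.sInf_le (exists_isEDFamily_of_coloring c)
    _ ≤ chromNum Gᶜ := (card_le_univ _).trans_eq (Fintype.card_fin _)

lemma indepNum_le_eternalDomNum : G.indepNum ≤ eternalDomNum G := by
  obtain ⟨F, hne, hcard, hF⟩ :=
    Nat.sInf_mem (⟨_, exists_isEDFamily_of_coloring Gᶜ.selfColoring⟩ : Set.Nonempty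
      {k | ∃ F : Set (Finset V), F.Nonempty ∧ (∀ D ∈ F, #D = k) ∧ IsEDFamily G F})
  exact hF.indepNum_le hne hcard

end Numbers

lemma indepNum_eq_simpleGraph_indepNum {V : Type*} (G : SimpleGraph V) :
    _root_.indepNum G = G.indepNum := by
  simp only [_root_.indepNum, SimpleGraph.indepNum, isNIndepSet_iff, IsIndepSet]
  congr 1
  ext k
  refine exists_congr fun s => and_comm.trans (and_congr_left' ?_)
  exact ⟨fun h u hu v hv _ => h u hu v hv, fun h u hu v hv huv => h hu hv huv.ne huv⟩

/-- For any finite perfect graph `G`, `α(G) = γ∞(G) = θ(G)`. -/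
theorem perfect_indepNum_eq_eternalDomNum_eq_cliqueCoverNum {V : Type*} [Fintype V]
    [DecidableEq V] (G : SimpleGraph V) (hG : IsPerfect G) :
    _root_.indepNum G = eternalDomNum G ∧ eternalDomNum G = cliqueCoverNum G := by
  have hθα : cliqueCoverNum G ≤ G.indepNum :=
    (chromNum_le_cliqueNum_of_isPerfect_compl Gᶜ (by rwa [compl_compl])).trans_eq cliqueNum_compl
  have hαγ := indepNum_le_eternalDomNum G
  have hγθ := eternalDomNum_le_cliqueCoverNum G
  rw [indepNum_eq_simpleGraph_indepNum]
  omega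
end

section
/- If G is a finite graph with independence number 2, then the eternal domination number of G is at most 3. -/
open SimpleGraph

variable {V : Type*}

/-!
With `α(G) ≤ 2` there is no independent triple, so every vertex outside a non-adjacent pair
`{a, b}` is adjacent to `a` or `b`. Hence three guards, two of which stand on a non-adjacent
pair, always dominate, and this invariant can be maintained: an attacked vertex `v` is taken
by the third guard if it is adjacent to `v` (keeping `{a, b}`); otherwise the third guard and
`v` form a new non-adjacent pair, and whichever of `a`, `b` is adjacent to `v` moves there.
Graphs with at most three vertices are trivial, one guard per vertex.
-/

open Finset

section IndepNum

variable [Fintype V] (G : SimpleGraph V)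

lemma bddAbove_indepSet_cards :
    BddAbove {k | ∃ s : Finset V, s.card = k ∧ ∀ u ∈ s, ∀ v ∈ s, ¬ G.Adj u v} :=
  ⟨Fintype.card V, fun _ ⟨s, hs, _⟩ => hs ▸ s.card_le_univ⟩

lemma card_le_indepNum {s : Finset V} (hs : ∀ u ∈ s, ∀ v ∈ s, ¬ G.Adj u v) :
    s.card ≤ _root_.indepNum G :=
  le_csSup (bddAbove_indepSet_cards G) ⟨s, rfl, hs⟩

lemma exists_indepSet_card_eq_indepNum :
    ∃ s : Finset V, s.card = _root_.indepNum G ∧ ∀ u ∈ s, ∀ v ∈ s, ¬ G.Adj u v :=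
  Nat.sSup_mem (s := {k | ∃ s : Finset V, s.card = k ∧ ∀ u ∈ s, ∀ v ∈ s, ¬ G.Adj u v})
    ⟨0, ∅, card_empty, by simp⟩ (bddAbove_indepSet_cards G)

end IndepNum

section EternalDomNum

variable [DecidableEq V] (G : SimpleGraph V)

lemma eternalDomNum_le_of_isEDFamily {F : Set (Finset V)} {k : ℕ} (hF : F.Nonempty)
    (hk : ∀ D ∈ F, D.card = k) (hED : IsEDFamily G F) : eternalDomNum G ≤ k :=
  Nat.sInf_le ⟨F, hF, hk, hED⟩

lemma eternalDomNum_le_card [Fintype V] : eternalDomNum G ≤ Fintype.card V :=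
  eternalDomNum_le_of_isEDFamily G (F := {univ}) ⟨univ, rfl⟩ (by rintro _ rfl; exact card_univ)
    (by
      rintro _ rfl
      exact ⟨fun v => ⟨v, mem_univ v, Or.inl rfl⟩, fun v hv => absurd (mem_univ v) hv⟩)

end EternalDomNum

section PairedTriples

variable (G : SimpleGraph V)

def pairedTriples : Set (Finset V) :=
  {D | D.card = 3 ∧ ∃ a ∈ D, ∃ b ∈ D, a ≠ b ∧ ¬ G.Adj a b}

variable {G}

lemma adj_or_adj_of_not_adj
    (hα : ∀ s : Finset V, (∀ u ∈ s, ∀ v ∈ s, ¬ G.Adj u v) → s.card ≤ 2)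
    {a b v : V} (hab : a ≠ b) (hnab : ¬ G.Adj a b) (hva : v ≠ a) (hvb : v ≠ b) :
    G.Adj a v ∨ G.Adj b v := by
  classical
  by_contra! h
  have hind : ∀ u ∈ ({a, b, v} : Finset V), ∀ w ∈ ({a, b, v} : Finset V), ¬ G.Adj u w := by
    simp only [mem_insert, mem_singleton]
    rintro u (rfl | rfl | rfl) w (rfl | rfl | rfl) <;> simp_all [G.adj_comm]
  have := hα _ hind
  rw [card_eq_three.mpr ⟨a, b, v, hab, hva.symm, hvb.symm, rfl⟩] at this
  omega

variable [DecidableEq V]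

lemma insert_erase_mem_pairedTriples {D : Finset V} (hD : D.card = 3) {u v p q : V}
    (hu : u ∈ D) (hv : v ∉ D) (hp : p ∈ insert v (D.erase u)) (hq : q ∈ insert v (D.erase u))
    (hpq : p ≠ q) (hnpq : ¬ G.Adj p q) : insert v (D.erase u) ∈ pairedTriples G := by
  refine ⟨?_, p, hp, q, hq, hpq, hnpq⟩
  rw [card_insert_of_notMem fun h => hv (mem_of_mem_erase h), card_erase_add_one hu, hD]

lemma isEDFamily_pairedTriples
    (hα : ∀ s : Finset V, (∀ u ∈ s, ∀ v ∈ s, ¬ G.Adj u v) → s.card ≤ 2) :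
    IsEDFamily G (pairedTriples G) := by
  rintro D ⟨hD, a, ha, b, hb, hab, hnab⟩
  have hdom : ∀ v ∉ D, G.Adj a v ∨ G.Adj b v := fun v hv =>
    adj_or_adj_of_not_adj hα hab hnab (ne_of_mem_of_not_mem ha hv).symm
      (ne_of_mem_of_not_mem hb hv).symm
  refine ⟨fun v => ?_, fun v hv => ?_⟩
  · by_cases hv : v ∈ D
    · exact ⟨v, hv, Or.inl rfl⟩
    · exact (hdom v hv).elim (fun h => ⟨a, ha, Or.inr h⟩) fun h => ⟨b, hb, Or.inr h⟩
  have hkeep : ∀ {u w}, w ∈ D → w ≠ u → w ∈ insert v (D.erase u) := fun hw hwu =>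
    mem_insert_of_mem (mem_erase.mpr ⟨hwu, hw⟩)
  have hnew : ∀ {u}, v ∈ insert v (D.erase u) := mem_insert_self _ _
  obtain ⟨c, hcD, hc⟩ := exists_mem_notMem_of_card_lt_card
    (show ({a, b} : Finset V).card < D.card by rw [hD]; exact card_le_two.trans_lt (by norm_num))
  simp only [mem_insert, mem_singleton, not_or] at hc
  by_cases hcv : G.Adj c v
  · exact ⟨c, hcD, hcv, insert_erase_mem_pairedTriples hD hcD hv (hkeep ha (Ne.symm hc.1))
      (hkeep hb (Ne.symm hc.2)) hab hnab⟩
  have hcv' : c ≠ v := ne_of_mem_of_not_mem hcD hv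
  rcases hdom v hv with hav | hbv
  · exact ⟨a, ha, hav, insert_erase_mem_pairedTriples hD ha hv (hkeep hcD hc.1) hnew hcv' hcv⟩
  · exact ⟨b, hb, hbv, insert_erase_mem_pairedTriples hD hb hv (hkeep hcD hc.2) hnew hcv' hcv⟩

end PairedTriples

/-- If `G` is a finite graph with independence number `2`, then `γ∞(G) ≤ 3`. -/
theorem eternalDomNum_le_three_of_indepNum_two {V : Type*} [Fintype V] [DecidableEq V]
    (G : SimpleGraph V) (h : _root_.indepNum G = 2) :
    eternalDomNum G ≤ 3 := by
  have hα : ∀ s : Finset V, (∀ u ∈ s, ∀ v ∈ s, ¬ G.Adj u v) → s.card ≤ 2 :=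
    fun s hs => h ▸ card_le_indepNum G hs
  obtain ⟨s, hs, hind⟩ := exists_indepSet_card_eq_indepNum G
  obtain ⟨x, y, hxy, rfl⟩ := card_eq_two.mp (hs.trans h)
  by_cases hV : Fintype.card V ≤ 3
  · exact (eternalDomNum_le_card G).trans hV
  obtain ⟨z, -, hz⟩ := exists_mem_notMem_of_card_lt_card
    (show ({x, y} : Finset V).card < (univ : Finset V).card by
      rw [card_univ]; exact card_le_two.trans_lt (by omega))
  have hxyz : {z, x, y} ∈ pairedTriples G :=
    ⟨card_insert_of_notMem hz ▸ congrArg (· + 1) (card_pair hxy),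
      x, by simp, y, by simp, hxy, hind x (by simp) y (by simp)⟩
  exact eternalDomNum_le_of_isEDFamily G ⟨_, hxyz⟩ (fun _ hD => hD.1)
    (isEDFamily_pairedTriples hα)
end

section
/- Let G be a triangle-free graph on n vertices with eternal domination number strictly less than its clique covering number and with clique covering number equal to ⌈n/2⌉. Then the bow tie product G ⋈ K₂ has eternal domination number strictly less than its clique covering number. -/
open SimpleGraph

variable {V : Type*}

/-- The bow tie product `G ⋈ H`: `(v,w)` is adjacent to `(v',w')` iff
`v v' ∈ E(G)` and (`w = w'` or `w w' ∈ E(H)`). -/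
def bowtie {α β : Type*} (G : SimpleGraph α) (H : SimpleGraph β) : SimpleGraph (α × β) where
  Adj p q := G.Adj p.1 q.1 ∧ (p.2 = q.2 ∨ H.Adj p.2 q.2)
  symm := ⟨by
    rintro p q ⟨h1, h2⟩
    exact ⟨h1.symm, by cases h2 with
      | inl h => exact Or.inl h.symm
      | inr h => exact Or.inr h.symm⟩⟩
  loopless := ⟨fun p h => G.irrefl h.1⟩


/-!
Guards on the layers `G × {j}` of `G ⋈ K₂` can defend independently, so
`γ∞(G ⋈ K₂) ≤ 2 γ∞(G) ≤ 2 (⌈n/2⌉ - 1) < n`, whereas `G ⋈ K₂` is again triangle-free and has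
`2n` vertices, so `θ(G ⋈ K₂) ≥ n`.
-/

open SimpleGraph Finset

namespace SimpleGraph

variable {α β : Type*} {G : SimpleGraph α}

def bowtieFst (G : SimpleGraph α) (H : SimpleGraph β) : bowtie G H →g G :=
  ⟨Prod.fst, fun h => h.1⟩

theorem CliqueFree.bowtie {n : ℕ} (hG : G.CliqueFree n) (H : SimpleGraph β) :
    (bowtie G H).CliqueFree n := by
  rw [cliqueFree_iff] at hG ⊢
  exact ⟨fun c => hG.false
    ⟨(bowtieFst G H).comp c.toHom, Hom.injective_of_top_hom _⟩⟩

theorem IsClique.card_le_of_cliqueFree {m : ℕ} {s : Finset α} (hs : G.IsClique s)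
    (hG : G.CliqueFree (m + 1)) : #s ≤ m := by
  by_contra! h
  exact hG.mono h s ⟨hs, rfl⟩

end SimpleGraph

section CliqueCover

variable [Fintype V] (G : SimpleGraph V)

theorem colorable_compl_cliqueCoverNum : Gᶜ.Colorable (cliqueCoverNum G) :=
  Nat.sInf_mem (s := {k | Gᶜ.Colorable k}) ⟨_, Gᶜ.colorable_of_fintype⟩

theorem card_le_mul_cliqueCoverNum_of_cliqueFree {m : ℕ} (hG : G.CliqueFree (m + 1)) :
    Fintype.card V ≤ m * cliqueCoverNum G := by
  obtain ⟨C⟩ := colorable_compl_cliqueCoverNum G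
  have hfiber : ∀ i, #{w | C w = i} ≤ m := fun i =>
    IsClique.card_le_of_cliqueFree
      (by simpa [Coloring.colorClass] using (isIndepSet_compl G).1 (C.isIndepSet_colorClass i)) hG
  simpa using card_le_mul_card_image_of_maps_to (fun w _ => mem_univ (C w)) m
    (fun i _ => hfiber i)

end CliqueCover

section EternalDomination

variable {β : Type*} [DecidableEq V]

theorem exists_isEDFamily_card_eq_eternalDomNum [Fintype V] (G : SimpleGraph V) :
    ∃ F : Set (Finset V), F.Nonempty ∧ (∀ D ∈ F, #D = eternalDomNum G) ∧ IsEDFamily G F := by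
  unfold eternalDomNum
  refine Nat.sInf_mem (s := {k | ∃ F : Set (Finset V), F.Nonempty ∧ (∀ D ∈ F, #D = k) ∧
    IsEDFamily G F}) ⟨_, {univ}, Set.singleton_nonempty _, fun _ hD => congrArg card hD, ?_⟩
  rintro _ rfl
  exact ⟨fun v => ⟨v, mem_univ v, Or.inl rfl⟩, fun v hv => absurd (mem_univ v) hv⟩

theorem IsEDFamily.eternalDomNum_le {G : SimpleGraph V} {F : Set (Finset V)} {k : ℕ}
    (hF : IsEDFamily G F) (hne : F.Nonempty) (hcard : ∀ D ∈ F, #D = k) : eternalDomNum G ≤ k := by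
  unfold eternalDomNum
  exact Nat.sInf_le ⟨F, hne, hcard, hF⟩

variable [Fintype β] [DecidableEq β]

def layers (D : β → Finset V) : Finset (V × β) :=
  univ.biUnion fun j => D j ×ˢ {j}

@[simp]
theorem mem_layers {D : β → Finset V} {p : V × β} : p ∈ layers D ↔ p.1 ∈ D p.2 := by
  obtain ⟨v, j⟩ := p
  simp [layers]

theorem card_layers (D : β → Finset V) : #(layers D) = ∑ j, #(D j) := by
  rw [layers, card_biUnion]
  · simp
  · intro i _ j _ hij
    exact disjoint_left.2 fun p hi hj => hij <|
      (mem_singleton.1 (mem_product.1 hi).2).symm.trans (mem_singleton.1 (mem_product.1 hj).2)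

theorem layers_update_insert_erase (D : β → Finset V) (j : β) (u v : V) :
    layers (Function.update D j (insert v ((D j).erase u))) =
      insert (v, j) ((layers D).erase (u, j)) := by
  ext ⟨w, i⟩
  by_cases hij : i = j
  · subst hij
    simp
  · simp [hij]

theorem IsEDFamily.image_layers {G : SimpleGraph V} {F : Set (Finset V)} (hF : IsEDFamily G F)
    (H : SimpleGraph β) : IsEDFamily (bowtie G H) (layers '' {D | ∀ j, D j ∈ F}) := by
  rintro _ ⟨D, hD, rfl⟩
  constructor
  · rintro ⟨v, j⟩
    obtain ⟨u, hu, huv⟩ := (hF _ (hD j)).1 v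
    exact ⟨(u, j), mem_layers.2 hu, huv.imp (congrArg (·, j)) fun h => ⟨h, Or.inl rfl⟩⟩
  · rintro ⟨v, j⟩ hv
    obtain ⟨u, hu, huv, hnext⟩ := (hF _ (hD j)).2 v fun h => hv (mem_layers.2 h)
    refine ⟨(u, j), mem_layers.2 hu, ⟨huv, Or.inl rfl⟩,
      Function.update D j (insert v ((D j).erase u)), ?_, layers_update_insert_erase D j u v⟩
    exact Function.forall_update_iff D (p := fun _ s => s ∈ F) |>.2 ⟨hnext, fun i _ => hD i⟩

theorem eternalDomNum_bowtie_le [Fintype V] (G : SimpleGraph V) (H : SimpleGraph β) :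
    eternalDomNum (bowtie G H) ≤ Fintype.card β * eternalDomNum G := by
  obtain ⟨F, ⟨D₀, hD₀⟩, hcard, hF⟩ := exists_isEDFamily_card_eq_eternalDomNum G
  refine (hF.image_layers H).eternalDomNum_le ⟨_, fun _ => D₀, fun _ => hD₀, rfl⟩ ?_
  rintro _ ⟨D, hD, rfl⟩
  simp [card_layers, hcard _ (hD _)]

end EternalDomination

/-- If `G` is a triangle-free graph on `n` vertices with `γ∞(G) < θ(G) = ⌈n/2⌉`,
then `γ∞(G ⋈ K₂) < θ(G ⋈ K₂)`. -/
theorem bowtie_K2_eternalDomNum_lt_cliqueCoverNum {V : Type*} [Fintype V] [DecidableEq V]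
    (G : SimpleGraph V) (htf : G.CliqueFree 3)
    (hlt : eternalDomNum G < cliqueCoverNum G)
    (hceil : cliqueCoverNum G = (Fintype.card V + 1) / 2) :
    eternalDomNum (bowtie G (completeGraph (Fin 2))) <
      cliqueCoverNum (bowtie G (completeGraph (Fin 2))) := by
  have hupper := eternalDomNum_bowtie_le G (completeGraph (Fin 2))
  have hlower := card_le_mul_cliqueCoverNum_of_cliqueFree (m := 2) _
    (htf.bowtie (completeGraph (Fin 2)))
  rw [Fintype.card_fin] at hupper
  rw [Fintype.card_prod, Fintype.card_fin] at hlower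
  omega
end
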